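/- arXiv:2009.00389 — 4 statements merged into one kernel-verified Lean document; each statement's English description precedes it below -/
import Mathlib

section
/- Let μ be a probability measure on ℝ supported in [0, λ₊] with density ρ satisfying ρ(x) ∼ √(λ₊ − x) on [λ₊ − δ, λ₊] (two-sided comparison with constants). Fix a real exponent a ≥ 2. Then there exist constants such that for all z = E + iη with λ₊ ≤ E ≤ λ₊ + δ/2 and 0 < η ≤ 1: ∫ |x − z|^{−a} dμ(x) ≤ C · (|E − λ₊| + η)^{−(a − 3/2)}. -/
/-!
Write `d = E - λ₊ + η`. For `x ≤ λ₊ ≤ E` both `η` and `E - x` bound `|x - z|` from below, so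
`|x - z|^{-a} ≤ 2^a (d + (λ₊ - x))^{-a}`. Away from the edge this is at most `2^a δ^{-a}`. Near the
edge, `μ` is dominated by the measure with density `C √(λ₊ - x)`, and with `t = λ₊ - x`,
`∫₀^δ (d + t)^{-a} √t dt ≤ ∫₀^∞ (d + t)^{1/2 - a} dt = d^{3/2 - a} / (a - 3/2)`, finite since
`a > 3/2`. As `d ≤ δ/2 + 1`, the far contribution is also `O(d^{3/2 - a})`.
-/

open MeasureTheory Set

lemma half_add_le_norm_ofReal_sub (x E η : ℝ) :
    (|E - x| + |η|) / 2 ≤ ‖(x : ℂ) - (E + η * Complex.I)‖ := by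
  have hre := Complex.abs_re_le_norm ((x : ℂ) - (E + η * Complex.I))
  have him := Complex.abs_im_le_norm ((x : ℂ) - (E + η * Complex.I))
  simp only [Complex.sub_re, Complex.ofReal_re, Complex.add_re, Complex.mul_re, Complex.I_re,
    mul_zero, Complex.ofReal_im, Complex.I_im, mul_one, sub_self, add_zero, Complex.sub_im,
    Complex.add_im, Complex.mul_im, zero_add, zero_sub, abs_neg] at hre him
  rw [abs_sub_comm] at hre
  linarith

lemma norm_ofReal_sub_rpow_neg_le {x E η a : ℝ} (hxE : x ≤ E) (hη : 0 < η) (ha : 0 ≤ a) :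
    ‖(x : ℂ) - (E + η * Complex.I)‖ ^ (-a) ≤ 2 ^ a * (E - x + η) ^ (-a) := by
  have hpos : 0 < E - x + η := by linarith
  have hle : (E - x + η) / 2 ≤ ‖(x : ℂ) - (E + η * Complex.I)‖ := by
    simpa [abs_of_nonneg (sub_nonneg.2 hxE), abs_of_pos hη] using half_add_le_norm_ofReal_sub x E η
  calc _ ≤ ((E - x + η) / 2) ^ (-a) :=
        Real.rpow_le_rpow_of_nonpos (by positivity) hle (by linarith)
    _ = 2 ^ a * (E - x + η) ^ (-a) := by
        rw [Real.div_rpow hpos.le zero_le_two, Real.rpow_neg zero_le_two, div_eq_mul_inv, inv_inv,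
          mul_comm]

lemma intervalIntegral_add_rpow_le {d δ p : ℝ} (hd : 0 < d) (hδ : 0 ≤ δ) (hp : p < -1) :
    ∫ t in (0 : ℝ)..δ, (d + t) ^ p ≤ d ^ (p + 1) / -(p + 1) := by
  rw [intervalIntegral.integral_comp_add_left (fun t => t ^ p) d, add_zero,
    integral_rpow (Or.inr ⟨hp.ne, notMem_uIcc_of_lt hd (by linarith)⟩), ← neg_div_neg_eq,
    neg_sub]
  have : 0 ≤ (d + δ) ^ (p + 1) := by positivity
  exact div_le_div_of_nonneg_right (by linarith) (by linarith)

lemma setLIntegral_Icc_add_sub_rpow_le {d δ p : ℝ} (lam : ℝ) (hd : 0 < d) (hδ : 0 ≤ δ)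
    (hp : p < -1) :
    ∫⁻ x in Icc (lam - δ) lam, ENNReal.ofReal ((d + (lam - x)) ^ p) ≤
      ENNReal.ofReal (d ^ (p + 1) / -(p + 1)) := by
  have hcont : ContinuousOn (fun x => (d + (lam - x)) ^ p) (Icc (lam - δ) lam) :=
    ContinuousOn.rpow_const (by fun_prop) fun x hx => Or.inl (by linarith [hx.2])
  rw [← ofReal_integral_eq_lintegral_ofReal hcont.integrableOn_Icc, integral_Icc_eq_integral_Ioc,
    ← intervalIntegral.integral_of_le (by linarith),
    intervalIntegral.integral_comp_sub_left (fun t => (d + t) ^ p) lam, sub_self, sub_sub_cancel]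
  · exact ENNReal.ofReal_le_ofReal (intervalIntegral_add_rpow_le hd hδ hp)
  · filter_upwards [ae_restrict_mem measurableSet_Icc] with x hx
    exact Real.rpow_nonneg (by linarith [hx.2]) _

lemma MeasureTheory.Measure.restrict_le_withDensity_of_density_le {α : Type*} [MeasurableSpace α]
    {μ ν : Measure α} {A : Set α} {ρ g : α → ℝ} (hA : MeasurableSet A) (hg : IntegrableOn g A ν)
    (hdens : ∀ s, MeasurableSet s → s ⊆ A → μ s = ENNReal.ofReal (∫ x in s, ρ x ∂ν))
    (hρ : ∀ x ∈ A, 0 ≤ ρ x) (hρg : ∀ x ∈ A, ρ x ≤ g x) :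
    μ.restrict A ≤ (ν.restrict A).withDensity fun x => ENNReal.ofReal (g x) := by
  refine Measure.le_iff.2 fun s hs => ?_
  have hsA : MeasurableSet (s ∩ A) := hs.inter hA
  have hmem : ∀ᵐ x ∂ν.restrict (s ∩ A), x ∈ A :=
    (ae_restrict_mem hsA).mono fun x hx => hx.2
  rw [Measure.restrict_apply hs, withDensity_apply _ hs, Measure.restrict_restrict hs,
    hdens _ hsA inter_subset_right,
    ← ofReal_integral_eq_lintegral_ofReal (hg.mono_set inter_subset_right)
      (hmem.mono fun x hx => (hρ x hx).trans (hρg x hx))]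
  exact ENNReal.ofReal_le_ofReal <| integral_mono_of_nonneg (hmem.mono hρ)
    (hg.mono_set inter_subset_right) (hmem.mono hρg)

section EdgeDensity

variable {μ : Measure ℝ} {ρ : ℝ → ℝ} {lam C δ a : ℝ}
  (hdens : ∀ s : Set ℝ, MeasurableSet s → s ⊆ Icc (lam - δ) lam →
    μ s = ENNReal.ofReal (∫ x in s, ρ x))
  (hρ : ∀ x ∈ Icc (lam - δ) lam, 0 ≤ ρ x)
  (hupp : ∀ x ∈ Icc (lam - δ) lam, ρ x ≤ C * Real.sqrt (lam - x))
include hdens hρ hupp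

lemma setLIntegral_Icc_add_sub_rpow_le_of_density_le {d : ℝ} (hC : 0 ≤ C) (hδ : 0 ≤ δ) (hd : 0 < d)
    (ha : 3 / 2 < a) :
    ∫⁻ x in Icc (lam - δ) lam, ENNReal.ofReal ((d + (lam - x)) ^ (-a)) ∂μ ≤
      ENNReal.ofReal (C * (d ^ (3 / 2 - a) / (a - 3 / 2))) := by
  have hdom := Measure.restrict_le_withDensity_of_density_le measurableSet_Icc
    (Continuous.integrableOn_Icc (by fun_prop)) hdens hρ hupp
  calc ∫⁻ x in Icc (lam - δ) lam, ENNReal.ofReal ((d + (lam - x)) ^ (-a)) ∂μ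
      ≤ ∫⁻ x in Icc (lam - δ) lam,
          ENNReal.ofReal (C * Real.sqrt (lam - x)) * ENNReal.ofReal ((d + (lam - x)) ^ (-a)) :=
        (lintegral_mono' hdom le_rfl).trans_eq
          (lintegral_withDensity_eq_lintegral_mul _ (by fun_prop) (by fun_prop))
    _ ≤ ∫⁻ x in Icc (lam - δ) lam,
          ENNReal.ofReal C * ENNReal.ofReal ((d + (lam - x)) ^ (-a + 1 / 2)) := by
        refine setLIntegral_mono (by fun_prop) fun x hx => ?_
        have hdt : 0 < d + (lam - x) := by linarith [hx.2]
        rw [← ENNReal.ofReal_mul (by positivity), ← ENNReal.ofReal_mul hC,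
          Real.rpow_add hdt, ← Real.sqrt_eq_rpow]
        refine ENNReal.ofReal_le_ofReal ?_
        have : Real.sqrt (lam - x) ≤ Real.sqrt (d + (lam - x)) := Real.sqrt_le_sqrt (by linarith)
        calc C * Real.sqrt (lam - x) * (d + (lam - x)) ^ (-a)
            ≤ C * Real.sqrt (d + (lam - x)) * (d + (lam - x)) ^ (-a) := by gcongr
          _ = _ := by ring
    _ = ENNReal.ofReal C *
          ∫⁻ x in Icc (lam - δ) lam, ENNReal.ofReal ((d + (lam - x)) ^ (-a + 1 / 2)) :=
        lintegral_const_mul _ (by fun_prop)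
    _ ≤ ENNReal.ofReal C * ENNReal.ofReal (d ^ (-a + 1 / 2 + 1) / -(-a + 1 / 2 + 1)) := by
        gcongr
        exact setLIntegral_Icc_add_sub_rpow_le lam hd hδ (by linarith)
    _ = ENNReal.ofReal (C * (d ^ (3 / 2 - a) / (a - 3 / 2))) := by
        rw [← ENNReal.ofReal_mul hC]
        ring_nf

lemma setLIntegral_Icc_norm_sub_rpow_le {E η : ℝ} (hC : 0 ≤ C) (hδ : 0 ≤ δ) (ha : 3 / 2 < a)
    (hE : lam ≤ E) (hη : 0 < η) :
    ∫⁻ x in Icc (lam - δ) lam, ENNReal.ofReal (‖(x : ℂ) - (E + η * Complex.I)‖ ^ (-a)) ∂μ ≤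
      ENNReal.ofReal (2 ^ a * (C * ((E - lam + η) ^ (3 / 2 - a) / (a - 3 / 2)))) := by
  calc _ ≤ ∫⁻ x in Icc (lam - δ) lam,
        ENNReal.ofReal (2 ^ a) * ENNReal.ofReal ((E - lam + η + (lam - x)) ^ (-a)) ∂μ := by
        refine setLIntegral_mono (by fun_prop) fun x hx => ?_
        rw [← ENNReal.ofReal_mul (by positivity)]
        refine ENNReal.ofReal_le_ofReal ((norm_ofReal_sub_rpow_neg_le (by linarith [hx.2]) hη
          (by linarith)).trans_eq ?_)
        ring_nf
    _ ≤ _ := by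
        rw [lintegral_const_mul _ (by fun_prop), ENNReal.ofReal_mul (by positivity)]
        gcongr
        exact setLIntegral_Icc_add_sub_rpow_le_of_density_le hdens hρ hupp hC hδ (by linarith) ha

end EdgeDensity

lemma setLIntegral_compl_Icc_le {μ : Measure ℝ} [IsProbabilityMeasure μ] {lam δ M : ℝ}
    {F : ℝ → ℝ} (hsupp : μ (Ioi lam) = 0) (hF : ∀ x < lam - δ, F x ≤ M) :
    ∫⁻ x in (Icc (lam - δ) lam)ᶜ, ENNReal.ofReal (F x) ∂μ ≤ ENNReal.ofReal M := by
  have hle : ∀ᵐ x ∂μ, x ∈ (Icc (lam - δ) lam)ᶜ → ENNReal.ofReal (F x) ≤ ENNReal.ofReal M := by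
    filter_upwards [measure_eq_zero_iff_ae_notMem.1 hsupp] with x hx hxA
    refine ENNReal.ofReal_le_ofReal (hF x ?_)
    by_contra! h
    exact hxA ⟨h, not_lt.1 hx⟩
  calc ∫⁻ x in (Icc (lam - δ) lam)ᶜ, ENNReal.ofReal (F x) ∂μ
      ≤ ∫⁻ _ in (Icc (lam - δ) lam)ᶜ, ENNReal.ofReal M ∂μ :=
        setLIntegral_mono_ae' measurableSet_Icc.compl hle
    _ = ENNReal.ofReal M * μ (Icc (lam - δ) lam)ᶜ := setLIntegral_const _ _
    _ ≤ ENNReal.ofReal M := mul_le_of_le_one_right' prob_le_one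

lemma one_le_rpow_mul_rpow_neg {d D r : ℝ} (hd : 0 < d) (hdD : d ≤ D) (hr : 0 ≤ r) :
    1 ≤ D ^ r * d ^ (-r) := by
  rw [Real.rpow_neg hd.le, ← div_eq_mul_inv, ← Real.div_rpow (hd.le.trans hdD) hd.le]
  exact Real.one_le_rpow ((one_le_div hd).2 hdD) hr

theorem stmt_7_general (μ : Measure ℝ) [IsProbabilityMeasure μ] (lam : ℝ) (ρ : ℝ → ℝ)
    (c C δ : ℝ) (hc : 0 < c) (hcC : c ≤ C) (hδ : 0 < δ) (a : ℝ) (ha : 2 ≤ a)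
    (hsupp1 : μ (Set.Ioi lam) = 0)
    (hdens : ∀ s : Set ℝ, MeasurableSet s → s ⊆ Set.Icc (lam - δ) lam →
      μ s = ENNReal.ofReal (∫ x in s, ρ x))
    (hlow : ∀ x ∈ Set.Icc (lam - δ) lam, c * Real.sqrt (lam - x) ≤ ρ x)
    (hupp : ∀ x ∈ Set.Icc (lam - δ) lam, ρ x ≤ C * Real.sqrt (lam - x)) :
    ∃ C' : ℝ, 0 < C' ∧
      ∀ E η : ℝ, lam ≤ E → E ≤ lam + δ / 2 → 0 < η → η ≤ 1 →
        (∫ x, ‖(x : ℂ) - ((E : ℂ) + (η : ℂ) * Complex.I)‖ ^ (-a) ∂μ) ≤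
          C' * (|E - lam| + η) ^ (-(a - 3 / 2)) := by
  have hC : 0 ≤ C := hc.le.trans hcC
  have ha' : 0 < a - 3 / 2 := by linarith
  have hρ : ∀ x ∈ Icc (lam - δ) lam, 0 ≤ ρ x := fun x hx =>
    (mul_nonneg hc.le (Real.sqrt_nonneg _)).trans (hlow x hx)
  refine ⟨2 ^ a * (C / (a - 3 / 2) + δ ^ (-a) * (δ / 2 + 1) ^ (a - 3 / 2)), by positivity,
    fun E η hE hEδ hη hη1 => ?_⟩
  have hd : 0 < E - lam + η := by linarith
  rw [abs_of_nonneg (sub_nonneg.2 hE), integral_eq_lintegral_of_nonneg_ae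
    (ae_of_all _ fun x => by positivity) (by fun_prop : Measurable _).aestronglyMeasurable]
  refine ENNReal.toReal_le_of_le_ofReal (by positivity) ?_
  rw [← lintegral_add_compl _ (measurableSet_Icc (a := lam - δ) (b := lam))]
  have hfar : ∫⁻ x in (Icc (lam - δ) lam)ᶜ,
      ENNReal.ofReal (‖(x : ℂ) - (E + η * Complex.I)‖ ^ (-a)) ∂μ ≤
      ENNReal.ofReal (2 ^ a * δ ^ (-a)) := setLIntegral_compl_Icc_le hsupp1 fun x hx =>
    (norm_ofReal_sub_rpow_neg_le (by linarith) hη (by linarith)).trans <|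
      mul_le_mul_of_nonneg_left (Real.rpow_le_rpow_of_nonpos hδ (by linarith) (by linarith))
        (by positivity)
  refine (add_le_add (setLIntegral_Icc_norm_sub_rpow_le hdens hρ hupp hC hδ.le (by linarith) hE
    hη) hfar).trans ?_
  rw [← ENNReal.ofReal_add (by positivity) (by positivity)]
  refine ENNReal.ofReal_le_ofReal ?_
  have habsorb := one_le_rpow_mul_rpow_neg hd (by linarith : E - lam + η ≤ δ / 2 + 1) ha'.le
  calc _ ≤ 2 ^ a * (C * ((E - lam + η) ^ (3 / 2 - a) / (a - 3 / 2))) +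
          2 ^ a * δ ^ (-a) * ((δ / 2 + 1) ^ (a - 3 / 2) * (E - lam + η) ^ (-(a - 3 / 2))) :=
        add_le_add le_rfl (le_mul_of_one_le_right (by positivity) habsorb)
    _ = _ := by rw [neg_sub]; ring

/-- For a probability measure `μ` supported in `[0, λ₊]` with density comparable
to `√(λ₊ - x)` near the right edge, and any fixed exponent `a ≥ 2`, there is a constant `C'`
such that for `λ₊ ≤ E ≤ λ₊ + δ/2` and `0 < η ≤ 1`,
`∫ |x - z|^{-a} dμ(x) ≤ C' (|E - λ₊| + η)^{-(a - 3/2)}` with `z = E + iη`. -/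
theorem stmt_7 (μ : Measure ℝ) [IsProbabilityMeasure μ] (lam : ℝ) (ρ : ℝ → ℝ)
    (c C δ : ℝ) (hc : 0 < c) (hcC : c ≤ C) (hδ : 0 < δ) (a : ℝ) (ha : 2 ≤ a)
    (hsupp0 : μ (Set.Iio 0) = 0) (hsupp1 : μ (Set.Ioi lam) = 0)
    (hdens : ∀ s : Set ℝ, MeasurableSet s → s ⊆ Set.Icc (lam - δ) lam →
      μ s = ENNReal.ofReal (∫ x in s, ρ x))
    (hlow : ∀ x ∈ Set.Icc (lam - δ) lam, c * Real.sqrt (lam - x) ≤ ρ x)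
    (hupp : ∀ x ∈ Set.Icc (lam - δ) lam, ρ x ≤ C * Real.sqrt (lam - x)) :
    ∃ C' : ℝ, 0 < C' ∧
      ∀ E η : ℝ, lam ≤ E → E ≤ lam + δ / 2 → 0 < η → η ≤ 1 →
        (∫ x, ‖(x : ℂ) - ((E : ℂ) + (η : ℂ) * Complex.I)‖ ^ (-a) ∂μ) ≤
          C' * (|E - lam| + η) ^ (-(a - 3 / 2)) :=
  stmt_7_general μ lam ρ c C δ hc hcC hδ a ha hsupp1 hdens hlow hupp
end

section
/- Let μ be a probability measure on ℝ supported in [0, d₁] with d₁ > 0, let m₀(ζ) = ∫(x − ζ)⁻¹ dμ(x), fix t > 0 and 0 < c_n ≤ 1, and define Φ(ζ) = ζ·(1 − c_n·t·m₀(ζ))² + (1 − c_n)·t·(1 − c_n·t·m₀(ζ)) for real ζ > d₁, and F(z, ζ) = 1 + (t(1−c_n) − √(t²(1−c_n)² + 4ζz))/(2ζ) − c_n·t·m₀(ζ) for z, ζ > 0 (real square root). Suppose ζ₊ > d₁ is a critical point of Φ, i.e. Φ'(ζ₊) = 0, and set a₊ = Φ(ζ₊). If a₊ > 0, ζ₊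 > 0, and t²(1−c_n)² + 4ζ₊a₊ ≥ 0, and if F(a₊, ζ₊) = 0, then also ∂F/∂ζ(a₊, ζ₊) = 0. -/
/-!
On the graph `z = Φ(ζ)` the discriminant `t²(1-cₙ)² + 4ζΦ(ζ)` is the perfect square
`(t(1-cₙ) + 2ζ(1 - cₙ t m₀(ζ)))²`, and `F(a₊, ζ₊) = 0` forces the base of that square to be positive
at `ζ₊`. Hence `F(Φ(ζ), ζ) = 0` for all `ζ` near `ζ₊`, and the chain rule gives
`∂_z F · Φ'(ζ₊) + ∂_ζ F = 0`, where `Φ'(ζ₊) = 0`.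
-/

open MeasureTheory Filter Topology Metric

theorem hasDerivAt_integral_inv_sub {μ : Measure ℝ} [IsFiniteMeasure μ] {d ζ₀ : ℝ}
    (hμ : μ (Set.Ioi d) = 0) (hζ₀ : d < ζ₀) :
    HasDerivAt (fun ζ : ℝ => ∫ x, (x - ζ)⁻¹ ∂μ) (∫ x, ((x - ζ₀) ^ 2)⁻¹ ∂μ) ζ₀ := by
  have hae : ∀ᵐ x ∂μ, x ≤ d := by
    rw [ae_iff]; simp only [not_le]; exact hμ
  set ε : ℝ := (ζ₀ - d) / 2 with hε_def
  have hε : 0 < ε := by linarith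
  have hgap : ∀ x ≤ d, ∀ ζ ∈ ball ζ₀ ε, ε ≤ ζ - x := by
    intro x hx ζ hζ
    rw [mem_ball, Real.dist_eq, abs_lt] at hζ
    linarith [hζ.1]
  refine (hasDerivAt_integral_of_dominated_loc_of_deriv_le (F := fun ζ x => (x - ζ)⁻¹)
      (F' := fun ζ x => ((x - ζ) ^ 2)⁻¹) (bound := fun _ => (ε ^ 2)⁻¹)
      (ball_mem_nhds ζ₀ hε)
      (.of_forall fun ζ => (measurable_id.sub_const ζ).inv.aestronglyMeasurable) ?_
      ((measurable_id.sub_const ζ₀).pow_const 2).inv.aestronglyMeasurable ?_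
      (integrable_const _) ?_).2
  · refine (integrable_const ε⁻¹).mono' (measurable_id.sub_const ζ₀).inv.aestronglyMeasurable ?_
    filter_upwards [hae] with x hx
    have h := hgap x hx ζ₀ (mem_ball_self hε)
    rw [Real.norm_eq_abs, abs_inv, abs_sub_comm, abs_of_pos (hε.trans_le h)]
    exact inv_anti₀ hε h
  · filter_upwards [hae] with x hx ζ hζ
    have h := hgap x hx ζ hζ
    rw [Real.norm_eq_abs, abs_inv, abs_of_nonneg (sq_nonneg _)]
    exact inv_anti₀ (by positivity) (by nlinarith)
  · filter_upwards [hae] with x hx ζ hζ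
    have hne : x - ζ ≠ 0 := by linarith [hgap x hx ζ hζ]
    exact (((hasDerivAt_id ζ).const_sub x).inv hne).congr_deriv (by simp)

theorem hasDerivAt_snd_eq_zero_of_vanishing_on_graph {𝕜 E F : Type*} [NontriviallyNormedField 𝕜]
    [NormedAddCommGroup E] [NormedSpace 𝕜 E] [NormedAddCommGroup F] [NormedSpace 𝕜 F]
    {f : E × 𝕜 → F} {φ : 𝕜 → E} {x₀ : 𝕜} (hf : DifferentiableAt 𝕜 f (φ x₀, x₀))
    (hφ : HasDerivAt φ 0 x₀) (hvanish : ∀ᶠ x in 𝓝 x₀, f (φ x, x) = 0) :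
    HasDerivAt (fun x => f (φ x₀, x)) 0 x₀ := by
  have hgraph : HasDerivAt (fun x => (φ x, x)) ((0 : E), (1 : 𝕜)) x₀ :=
    hφ.prodMk (hasDerivAt_id x₀)
  have hslice : HasDerivAt (fun x => (φ x₀, x)) ((0 : E), (1 : 𝕜)) x₀ :=
    (hasDerivAt_const x₀ (φ x₀)).prodMk (hasDerivAt_id x₀)
  have hzero : fderiv 𝕜 f (φ x₀, x₀) (0, 1) = 0 :=
    (hf.hasFDerivAt.comp_hasDerivAt (f := fun x => (φ x, x)) x₀ hgraph).unique
      ((hasDerivAt_const x₀ (0 : F)).congr_of_eventuallyEq hvanish)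
  have h := hf.hasFDerivAt.comp_hasDerivAt (f := fun x => (φ x₀, x)) x₀ hslice
  rw [hzero] at h
  exact h

theorem deriv_selfConsistent_eq_zero_of_isCritical {m : ℝ → ℝ} {t c ζ₀ : ℝ}
    (hm : DifferentiableAt ℝ m ζ₀) (hζ₀ : 0 < ζ₀)
    (hcrit : deriv (fun ζ => ζ * (1 - c * t * m ζ) ^ 2 + (1 - c) * t * (1 - c * t * m ζ)) ζ₀ = 0)
    (hpos : 0 < t * (1 - c) + 2 * ζ₀ * (1 - c * t * m ζ₀)) :
    deriv (fun ζ => 1 + (t * (1 - c) - √(t ^ 2 * (1 - c) ^ 2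
        + 4 * ζ * (ζ₀ * (1 - c * t * m ζ₀) ^ 2 + (1 - c) * t * (1 - c * t * m ζ₀)))) / (2 * ζ)
        - c * t * m ζ) ζ₀ = 0 := by
  set Φ : ℝ → ℝ := fun ζ => ζ * (1 - c * t * m ζ) ^ 2 + (1 - c) * t * (1 - c * t * m ζ)
  have hdiscr : ∀ ζ, t ^ 2 * (1 - c) ^ 2 + 4 * ζ * Φ ζ
      = (t * (1 - c) + 2 * ζ * (1 - c * t * m ζ)) ^ 2 := fun ζ => by ring
  have hΦ : HasDerivAt Φ 0 ζ₀ := hcrit ▸ (by fun_prop : DifferentiableAt ℝ Φ ζ₀).hasDerivAt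
  have hF : DifferentiableAt ℝ (fun p : ℝ × ℝ => 1 + (t * (1 - c)
      - √(t ^ 2 * (1 - c) ^ 2 + 4 * p.2 * p.1)) / (2 * p.2) - c * t * m p.2) (Φ ζ₀, ζ₀) := by
    have hm_snd : DifferentiableAt ℝ (fun p : ℝ × ℝ => m p.2) (Φ ζ₀, ζ₀) :=
      hm.comp _ differentiableAt_snd
    have hsqrt : t ^ 2 * (1 - c) ^ 2 + 4 * ζ₀ * Φ ζ₀ ≠ 0 := by rw [hdiscr]; positivity
    fun_prop (disch := first | exact hsqrt | positivity)
  have hvanish : ∀ᶠ ζ in 𝓝 ζ₀, 1 + (t * (1 - c) - √(t ^ 2 * (1 - c) ^ 2 + 4 * ζ * Φ ζ)) / (2 * ζ)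
      - c * t * m ζ = 0 := by
    have hcont : ContinuousAt (fun ζ => t * (1 - c) + 2 * ζ * (1 - c * t * m ζ)) ζ₀ := by
      have := hm.continuousAt
      fun_prop
    filter_upwards [hcont.eventually (lt_mem_nhds hpos), lt_mem_nhds hζ₀] with ζ hpos' hζ
    rw [hdiscr, Real.sqrt_sq hpos'.le]
    field_simp
    ring
  exact (hasDerivAt_snd_eq_zero_of_vanishing_on_graph hF hΦ hvanish).deriv

theorem stmt_9_general (μ : Measure ℝ) [IsProbabilityMeasure μ] (d1 : ℝ)
    (hs1 : μ (Set.Ioi d1) = 0)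
    (t cn : ℝ)
    (ζp : ℝ) (hζ : d1 < ζp)
    (hcrit : deriv (fun ζ : ℝ =>
        ζ * (1 - cn * t * ∫ x, (x - ζ)⁻¹ ∂μ) ^ 2
          + (1 - cn) * t * (1 - cn * t * ∫ x, (x - ζ)⁻¹ ∂μ)) ζp = 0)
    (ap : ℝ)
    (hap : ap = ζp * (1 - cn * t * ∫ x, (x - ζp)⁻¹ ∂μ) ^ 2
          + (1 - cn) * t * (1 - cn * t * ∫ x, (x - ζp)⁻¹ ∂μ))
    (hap0 : 0 < ap) (hζp0 : 0 < ζp)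
    (hF : 1 + (t * (1 - cn) - Real.sqrt (t ^ 2 * (1 - cn) ^ 2 + 4 * ζp * ap)) / (2 * ζp)
        - cn * t * ∫ x, (x - ζp)⁻¹ ∂μ = 0) :
    deriv (fun ζ : ℝ =>
        1 + (t * (1 - cn) - Real.sqrt (t ^ 2 * (1 - cn) ^ 2 + 4 * ζ * ap)) / (2 * ζ)
          - cn * t * ∫ x, (x - ζ)⁻¹ ∂μ) ζp = 0 := by
  have hsqrt_eq : √(t ^ 2 * (1 - cn) ^ 2 + 4 * ζp * ap)
      = t * (1 - cn) + 2 * ζp * (1 - cn * t * ∫ x, (x - ζp)⁻¹ ∂μ) := by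
    generalize ∫ x, (x - ζp)⁻¹ ∂μ = m₀ at hF ⊢
    field_simp at hF
    linear_combination -hF
  have hpos : 0 < t * (1 - cn) + 2 * ζp * (1 - cn * t * ∫ x, (x - ζp)⁻¹ ∂μ) :=
    hsqrt_eq ▸ Real.sqrt_pos.2 (by positivity)
  subst hap
  exact deriv_selfConsistent_eq_zero_of_isCritical (m := fun ζ => ∫ x, (x - ζ)⁻¹ ∂μ)
    (hasDerivAt_integral_inv_sub hs1 hζ).differentiableAt hζp0 hcrit hpos

/-- At a critical point `ζ₊ > d₁` of the inverse subordination function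
`Φ(ζ) = ζ(1 - cₙ t m₀(ζ))² + (1-cₙ) t (1 - cₙ t m₀(ζ))` with value `a₊ = Φ(ζ₊) > 0`, if
`F(a₊, ζ₊) = 0` (with `F(z,ζ) = 1 + (t(1-cₙ) - √(t²(1-cₙ)² + 4ζz))/(2ζ) - cₙ t m₀(ζ)` and
nonnegative discriminant), then also `∂F/∂ζ (a₊, ζ₊) = 0`. -/
theorem stmt_9 (μ : Measure ℝ) [IsProbabilityMeasure μ] (d1 : ℝ) (hd1 : 0 < d1)
    (hs0 : μ (Set.Iio 0) = 0) (hs1 : μ (Set.Ioi d1) = 0)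
    (t cn : ℝ) (ht : 0 < t) (hcn0 : 0 < cn) (hcn1 : cn ≤ 1)
    (ζp : ℝ) (hζ : d1 < ζp)
    (hcrit : deriv (fun ζ : ℝ =>
        ζ * (1 - cn * t * ∫ x, (x - ζ)⁻¹ ∂μ) ^ 2
          + (1 - cn) * t * (1 - cn * t * ∫ x, (x - ζ)⁻¹ ∂μ)) ζp = 0)
    (ap : ℝ)
    (hap : ap = ζp * (1 - cn * t * ∫ x, (x - ζp)⁻¹ ∂μ) ^ 2
          + (1 - cn) * t * (1 - cn * t * ∫ x, (x - ζp)⁻¹ ∂μ))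
    (hap0 : 0 < ap) (hζp0 : 0 < ζp)
    (hdisc : 0 ≤ t ^ 2 * (1 - cn) ^ 2 + 4 * ζp * ap)
    (hF : 1 + (t * (1 - cn) - Real.sqrt (t ^ 2 * (1 - cn) ^ 2 + 4 * ζp * ap)) / (2 * ζp)
        - cn * t * ∫ x, (x - ζp)⁻¹ ∂μ = 0) :
    deriv (fun ζ : ℝ =>
        1 + (t * (1 - cn) - Real.sqrt (t ^ 2 * (1 - cn) ^ 2 + 4 * ζ * ap)) / (2 * ζ)
          - cn * t * ∫ x, (x - ζ)⁻¹ ∂μ) ζp = 0 :=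
  stmt_9_general μ d1 hs1 t cn ζp hζ hcrit ap hap hap0 hζp0 hF
end

section
/- Let ρ be a probability density on ℝ supported in (−∞, λ₊] satisfying c√(λ₊−x) ≤ ρ(x) ≤ C√(λ₊−x) for x ∈ [λ₊ − δ, λ₊] (constants c, C, δ > 0). For 1 ≤ j ≤ n, define the classical location γ_j = sup{ x : ∫_x^∞ ρ > (j−1)/n }. Then γ₁ = λ₊, and there are constants c', C' > 0 so that for all j ≥ 2 with γ_j ≥ λ₊ − δ/2, one has c'·(j/n)^{2/3} ≤ λ₊ − γ_j ≤ C'·(j/n)^{2/3}. -/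
/-!
The tail mass `F x = ∫_x^∞ ρ` vanishes on `[λ₊, ∞)`. Bounding `ρ` by its extreme values on
`[t, λ₊]`, resp. on the left half of that interval, gives
`c ((λ₊ - t) / 2)^{3/2} ≤ F t ≤ C (λ₊ - t)^{3/2}` near the edge. Hence `F > 0` exactly on
`(-∞, λ₊)`, so `γ₁ = λ₊`; and `γ_j` is the supremum of the superlevel set `{F > (j - 1) / n}`,
so inverting the two bounds gives `λ₊ - γ_j ≍ ((j - 1) / n)^{2/3} ≍ (j / n)^{2/3}`.
-/

open MeasureTheory Set Filter Topology

noncomputable def tailMass (ρ : ℝ → ℝ) (x : ℝ) : ℝ := ∫ y in Ioi x, ρ y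

section TailMass

variable {ρ : ℝ → ℝ} {lam : ℝ}

theorem tailMass_antitone (hnonneg : ∀ x, 0 ≤ ρ x) (hint : Integrable ρ) :
    Antitone (tailMass ρ) := fun _ _ hxy =>
  setIntegral_mono_set hint.integrableOn (Eventually.of_forall hnonneg)
    (Ioi_subset_Ioi hxy).eventuallyLE

theorem tendsto_tailMass_atBot (hint : Integrable ρ) :
    Tendsto (tailMass ρ) atBot (𝓝 (∫ x, ρ x)) :=
  (aecover_Ioi tendsto_id).integral_tendsto_of_countably_generated hint

theorem tailMass_eq_zero_of_le (hsupp : ∀ x, lam < x → ρ x = 0) {x : ℝ} (hx : lam ≤ x) :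
    tailMass ρ x = 0 := by
  rw [tailMass, setIntegral_congr_fun measurableSet_Ioi
    fun y hy => hsupp y (hx.trans_lt hy), integral_zero]

theorem exists_lt_tailMass (hint : Integrable ρ) {a : ℝ} (ha : a < ∫ x, ρ x) :
    ∃ x, a < tailMass ρ x :=
  ((tendsto_tailMass_atBot hint).eventually (eventually_gt_nhds ha)).exists

theorem lt_of_lt_tailMass (hsupp : ∀ x, lam < x → ρ x = 0) {a x : ℝ} (ha : 0 ≤ a)
    (h : a < tailMass ρ x) : x < lam := by
  by_contra! hx
  rw [tailMass_eq_zero_of_le hsupp hx] at h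
  linarith

theorem tailMass_eq_intervalIntegral_add (hint : Integrable ρ) {t m : ℝ} (htm : t ≤ m) :
    tailMass ρ t = (∫ y in t..m, ρ y) + tailMass ρ m := by
  rw [tailMass, tailMass, intervalIntegral.integral_of_le htm, ← Ioc_union_Ioi_eq_Ioi htm,
    setIntegral_union (Ioc_disjoint_Ioi le_rfl) measurableSet_Ioi hint.integrableOn
    hint.integrableOn]

theorem tailMass_eq_intervalIntegral (hint : Integrable ρ) (hsupp : ∀ x, lam < x → ρ x = 0)
    {t : ℝ} (ht : t ≤ lam) : tailMass ρ t = ∫ y in t..lam, ρ y := by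
  rw [tailMass_eq_intervalIntegral_add hint ht, tailMass_eq_zero_of_le hsupp le_rfl, add_zero]

variable {δ β : ℝ}

theorem tailMass_le_mul_rpow (hint : Integrable ρ) (hsupp : ∀ x, lam < x → ρ x = 0) {C : ℝ}
    (hC : 0 ≤ C) (hβ : 0 ≤ β) (hupp : ∀ x ∈ Icc (lam - δ) lam, ρ x ≤ C * (lam - x) ^ β)
    {t : ℝ} (ht : t ∈ Icc (lam - δ) lam) : tailMass ρ t ≤ C * (lam - t) ^ (β + 1) := by
  have hρ_le : ∀ x ∈ Icc t lam, ρ x ≤ C * (lam - t) ^ β := fun x hx =>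
    (hupp x ⟨ht.1.trans hx.1, hx.2⟩).trans <| mul_le_mul_of_nonneg_left
      (Real.rpow_le_rpow (by linarith [hx.2]) (by linarith [hx.1]) hβ) hC
  calc tailMass ρ t = ∫ y in t..lam, ρ y := tailMass_eq_intervalIntegral hint hsupp ht.2
    _ ≤ ∫ _ in t..lam, C * (lam - t) ^ β :=
      intervalIntegral.integral_mono_on ht.2 hint.intervalIntegrable intervalIntegrable_const hρ_le
    _ = C * (lam - t) ^ (β + 1) := by
      rw [intervalIntegral.integral_const, smul_eq_mul,
        Real.rpow_add_one' (by linarith [ht.2]) (by linarith)]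
      ring

theorem mul_rpow_le_tailMass (hnonneg : ∀ x, 0 ≤ ρ x) (hint : Integrable ρ) {c : ℝ}
    (hc : 0 ≤ c) (hβ : 0 ≤ β) (hlow : ∀ x ∈ Icc (lam - δ) lam, c * (lam - x) ^ β ≤ ρ x)
    {t : ℝ} (ht : t ∈ Icc (lam - δ) lam) : c * ((lam - t) / 2) ^ (β + 1) ≤ tailMass ρ t := by
  set m := (t + lam) / 2 with hm
  have hρ_ge : ∀ x ∈ Icc t m, c * ((lam - t) / 2) ^ β ≤ ρ x := fun x hx =>
    (mul_le_mul_of_nonneg_left (Real.rpow_le_rpow (by linarith [ht.2])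
      (by linarith [hx.2, hm]) hβ) hc).trans
      (hlow x ⟨ht.1.trans hx.1, by linarith [hx.2, ht.2, hm]⟩)
  calc c * ((lam - t) / 2) ^ (β + 1) = ∫ _ in t..m, c * ((lam - t) / 2) ^ β := by
        rw [intervalIntegral.integral_const, smul_eq_mul,
          Real.rpow_add_one' (by linarith [ht.2]) (by linarith)]
        ring
    _ ≤ ∫ y in t..m, ρ y := intervalIntegral.integral_mono_on (by linarith [ht.2, hm])
        intervalIntegrable_const hint.intervalIntegrable hρ_ge
    _ ≤ tailMass ρ t := by
      rw [tailMass_eq_intervalIntegral_add hint (show t ≤ m by linarith [ht.2, hm])]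
      exact le_add_of_nonneg_right (integral_nonneg fun y => hnonneg y)

theorem tailMass_pos_iff (hnonneg : ∀ x, 0 ≤ ρ x) (hint : Integrable ρ)
    (hsupp : ∀ x, lam < x → ρ x = 0) (hδ : 0 < δ) {c : ℝ} (hc : 0 < c) (hβ : 0 ≤ β)
    (hlow : ∀ x ∈ Icc (lam - δ) lam, c * (lam - x) ^ β ≤ ρ x) {x : ℝ} :
    0 < tailMass ρ x ↔ x < lam := by
  refine ⟨lt_of_lt_tailMass hsupp le_rfl, fun hx => ?_⟩
  set t := max x (lam - δ)
  have htl : t < lam := max_lt hx (by linarith)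
  calc 0 < c * ((lam - t) / 2) ^ (β + 1) := by
        have : 0 < lam - t := sub_pos.2 htl
        positivity
    _ ≤ tailMass ρ t := mul_rpow_le_tailMass hnonneg hint hc.le hβ hlow ⟨le_max_right _ _, htl.le⟩
    _ ≤ tailMass ρ x := tailMass_antitone hnonneg hint (le_max_left _ _)

end TailMass

section Quantile

variable {F : ℝ → ℝ} {lam δ a p : ℝ}

theorem div_rpow_inv_lt_iff {c s : ℝ} (ha : 0 ≤ a) (hc : 0 < c) (hs : 0 ≤ s) (hp : 0 < p) :
    (a / c) ^ p⁻¹ < s ↔ a < c * s ^ p := by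
  rw [Real.rpow_inv_lt_iff_of_pos (div_nonneg ha hc.le) hs hp, div_lt_iff₀' hc]

theorem rpow_inv_le_sub_sSup {C : ℝ} (hC : 0 < C) (hp : 0 < p) (ha : 0 ≤ a)
    (hF : ∀ t ∈ Icc (lam - δ) lam, F t ≤ C * (lam - t) ^ p)
    (hne : {x | a < F x}.Nonempty) (hle : ∀ x, a < F x → x ≤ lam)
    (hγ : lam - δ < sSup {x | a < F x}) :
    (a / C) ^ p⁻¹ ≤ lam - sSup {x | a < F x} := by
  by_contra! h
  obtain ⟨x, hxS, hx⟩ := exists_lt_of_lt_csSup hne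
    (max_lt hγ (by linarith : lam - (a / C) ^ p⁻¹ < _))
  rw [max_lt_iff] at hx
  have hxlam := hle x hxS
  have : a < C * (lam - x) ^ p := lt_of_lt_of_le hxS (hF x ⟨hx.1.le, hxlam⟩)
  rw [← div_rpow_inv_lt_iff ha hC (sub_nonneg.2 hxlam) hp] at this
  linarith

theorem sub_sSup_le_two_mul_rpow_inv {c : ℝ} (hc : 0 < c) (hp : 0 < p) (ha : 0 ≤ a)
    (hF : ∀ t ∈ Icc (lam - δ) lam, c * ((lam - t) / 2) ^ p ≤ F t)
    (hbdd : BddAbove {x | a < F x}) (hγ : lam - δ ≤ sSup {x | a < F x}) :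
    lam - sSup {x | a < F x} ≤ 2 * (a / c) ^ p⁻¹ := by
  by_contra! h
  set γ := sSup {x | a < F x}
  set x := (γ + (lam - 2 * (a / c) ^ p⁻¹)) / 2 with hx
  have hM : 0 ≤ (a / c) ^ p⁻¹ := Real.rpow_nonneg (div_nonneg ha hc.le) _
  have hxS : a < F x := by
    refine lt_of_lt_of_le ?_ (hF x ⟨by linarith, by linarith⟩)
    rw [← div_rpow_inv_lt_iff ha hc (by linarith) hp]
    linarith
  linarith [le_csSup hbdd hxS]

end Quantile

theorem sub_sSup_setOf_lt_tailMass_mem_Icc {ρ : ℝ → ℝ} {lam δ β c C a : ℝ}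
    (hnonneg : ∀ x, 0 ≤ ρ x) (hint : Integrable ρ) (hsupp : ∀ x, lam < x → ρ x = 0)
    (hc : 0 < c) (hC : 0 < C) (hβ : 0 ≤ β)
    (hlow : ∀ x ∈ Icc (lam - δ) lam, c * (lam - x) ^ β ≤ ρ x)
    (hupp : ∀ x ∈ Icc (lam - δ) lam, ρ x ≤ C * (lam - x) ^ β)
    (ha₀ : 0 ≤ a) (ha₁ : a < ∫ x, ρ x) (hγ : lam - δ < sSup {x | a < tailMass ρ x}) :
    lam - sSup {x | a < tailMass ρ x} ∈
      Icc ((a / C) ^ (β + 1)⁻¹) (2 * (a / c) ^ (β + 1)⁻¹) := by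
  have hp : 0 < β + 1 := by linarith
  have hle : ∀ x, a < tailMass ρ x → x ≤ lam := fun x h => (lt_of_lt_tailMass hsupp ha₀ h).le
  exact ⟨rpow_inv_le_sub_sSup hC hp ha₀
      (fun t ht => tailMass_le_mul_rpow hint hsupp hC.le hβ hupp ht)
      (exists_lt_tailMass hint ha₁) hle hγ,
    sub_sSup_le_two_mul_rpow_inv hc hp ha₀
      (fun t ht => mul_rpow_le_tailMass hnonneg hint hc.le hβ hlow ht) ⟨lam, hle⟩ hγ.le⟩

section SubOneDiv

variable {j n K q : ℝ}

theorem rpow_mul_rpow_le_sub_one_div_rpow (hK : 0 < K) (hq : 0 ≤ q) (hn : 0 < n) (hj : 2 ≤ j) :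
    (1 / (2 * K)) ^ q * (j / n) ^ q ≤ ((j - 1) / n / K) ^ q := by
  rw [← Real.mul_rpow (by positivity) (by positivity)]
  gcongr
  rw [div_mul_div_comm, div_div, div_le_div_iff₀ (by positivity) (by positivity)]
  nlinarith [mul_nonneg (mul_nonneg hK.le hn.le) (sub_nonneg.2 hj)]

theorem sub_one_div_rpow_le_rpow_mul_rpow (hK : 0 < K) (hq : 0 ≤ q) (hn : 0 < n) (hj : 1 ≤ j) :
    ((j - 1) / n / K) ^ q ≤ (1 / K) ^ q * (j / n) ^ q := by
  rw [← Real.mul_rpow (by positivity) (by positivity), one_div_mul_eq_div]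
  gcongr
  linarith

end SubOneDiv

theorem stmt_14_general (ρ : ℝ → ℝ) (lam : ℝ) (c C δ : ℝ) (n : ℕ)
    (hn : 1 ≤ n) (hc : 0 < c) (hcC : c ≤ C) (hδ : 0 < δ)
    (hnonneg : ∀ x, 0 ≤ ρ x)
    (hint : Integrable ρ) (hprob : ∫ x, ρ x = 1)
    (hsupp : ∀ x, lam < x → ρ x = 0)
    (hlow : ∀ x ∈ Set.Icc (lam - δ) lam, c * Real.sqrt (lam - x) ≤ ρ x)
    (hupp : ∀ x ∈ Set.Icc (lam - δ) lam, ρ x ≤ C * Real.sqrt (lam - x)) :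
    sSup {x : ℝ | ((1 : ℝ) - 1) / n < ∫ y in Set.Ioi x, ρ y} = lam ∧
    ∃ c' C' : ℝ, 0 < c' ∧ 0 < C' ∧
      ∀ j : ℕ, 2 ≤ j → j ≤ n →
        lam - δ / 2 ≤ sSup {x : ℝ | ((j : ℝ) - 1) / n < ∫ y in Set.Ioi x, ρ y} →
          c' * ((j : ℝ) / n) ^ ((2 : ℝ) / 3) ≤
              lam - sSup {x : ℝ | ((j : ℝ) - 1) / n < ∫ y in Set.Ioi x, ρ y} ∧
          lam - sSup {x : ℝ | ((j : ℝ) - 1) / n < ∫ y in Set.Ioi x, ρ y} ≤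
              C' * ((j : ℝ) / n) ^ ((2 : ℝ) / 3) := by
  have hn0 : (0 : ℝ) < n := by exact_mod_cast hn
  have hC : 0 < C := hc.trans_le hcC
  have hβ : (0 : ℝ) ≤ 1 / 2 := by norm_num
  have hq : ((1 : ℝ) / 2 + 1)⁻¹ = 2 / 3 := by norm_num
  simp only [Real.sqrt_eq_rpow] at hlow hupp
  refine ⟨?_, (1 / (2 * C)) ^ ((2 : ℝ) / 3), 2 * (1 / c) ^ ((2 : ℝ) / 3), by positivity,
    by positivity, fun j hj2 hjn hγ => ?_⟩
  · simp only [sub_self, zero_div]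
    exact (congrArg sSup <| Set.ext fun _ =>
      tailMass_pos_iff hnonneg hint hsupp hδ hc hβ hlow).trans csSup_Iio
  have hj : (2 : ℝ) ≤ j := by exact_mod_cast hj2
  have hjn' : (j : ℝ) ≤ n := by exact_mod_cast hjn
  obtain ⟨lower, upper⟩ := sub_sSup_setOf_lt_tailMass_mem_Icc (a := ((j : ℝ) - 1) / n)
    hnonneg hint hsupp hc hC hβ hlow hupp (div_nonneg (by linarith) hn0.le)
    (by rw [hprob, div_lt_one hn0]; linarith) (lt_of_lt_of_le (by linarith) hγ)
  rw [hq] at lower upper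
  refine ⟨(rpow_mul_rpow_le_sub_one_div_rpow hC (by norm_num) hn0 hj).trans lower,
    upper.trans ?_⟩
  rw [mul_assoc]
  gcongr
  exact sub_one_div_rpow_le_rpow_mul_rpow hc (by norm_num) hn0 (by linarith)

/-- For a probability density `ρ` supported in `(-∞, λ₊]` with square-root
behavior `ρ(x) ≍ √(λ₊ - x)` on `[λ₊ - δ, λ₊]`, the classical locations
`γ_j = sup{x : ∫_x^∞ ρ > (j-1)/n}` satisfy `γ₁ = λ₊` and
`λ₊ - γ_j ≍ (j/n)^{2/3}` for `j ≥ 2` with `γ_j ≥ λ₊ - δ/2`. -/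
theorem stmt_14 (ρ : ℝ → ℝ) (lam : ℝ) (c C δ : ℝ) (n : ℕ)
    (hn : 1 ≤ n) (hc : 0 < c) (hcC : c ≤ C) (hδ : 0 < δ)
    (hmeas : Measurable ρ) (hnonneg : ∀ x, 0 ≤ ρ x)
    (hint : Integrable ρ) (hprob : ∫ x, ρ x = 1)
    (hsupp : ∀ x, lam < x → ρ x = 0)
    (hlow : ∀ x ∈ Set.Icc (lam - δ) lam, c * Real.sqrt (lam - x) ≤ ρ x)
    (hupp : ∀ x ∈ Set.Icc (lam - δ) lam, ρ x ≤ C * Real.sqrt (lam - x)) :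
    sSup {x : ℝ | ((1 : ℝ) - 1) / n < ∫ y in Set.Ioi x, ρ y} = lam ∧
    ∃ c' C' : ℝ, 0 < c' ∧ 0 < C' ∧
      ∀ j : ℕ, 2 ≤ j → j ≤ n →
        lam - δ / 2 ≤ sSup {x : ℝ | ((j : ℝ) - 1) / n < ∫ y in Set.Ioi x, ρ y} →
          c' * ((j : ℝ) / n) ^ ((2 : ℝ) / 3) ≤
              lam - sSup {x : ℝ | ((j : ℝ) - 1) / n < ∫ y in Set.Ioi x, ρ y} ∧
          lam - sSup {x : ℝ | ((j : ℝ) - 1) / n < ∫ y in Set.Ioi x, ρ y} ≤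
              C' * ((j : ℝ) / n) ^ ((2 : ℝ) / 3) :=
  stmt_14_general ρ lam c C δ n hn hc hcC hδ hnonneg hint hprob hsupp hlow hupp
end

section
/- Let (x_i)_{i=1}^{N} be independent real random variables with E x_i = 0, E x_i² ≤ n⁻¹, and E|√n·x_i|^k ≤ C_k for every fixed k. Let (A_i) be deterministic complex numbers. Then for every ε > 0 and D > 0 there exists n₀ such that for n ≥ n₀: P( |Σ_i A_i x_i| > n^ε · n^{−1/2} (Σ_i |A_i|²)^{1/2} ) ≤ n^{−D}. -/
open MeasureTheory ProbabilityTheory Finset Filter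

/-!
The moment method. If `S` and `y` are independent, `E y = 0` and `|E y^m| ≤ b` for
`2 ≤ m ≤ 2p`, then in the binomial expansion of `E (S + y)^(2p)` the term linear in `y` vanishes
and every lower moment of `S` is at most `1 + E S^(2p)`, so
`1 + E (S + y)^(2p) ≤ (1 + E S^(2p)) (1 + 4^p b)`. Iterating over the summands gives
`E (∑ y_i)^(2p) ≤ exp (4^p ∑ b_i)`. Normalising the variables by `√n` and the coefficients to
unit `ℓ²` norm, `b_i ≤ C r_i²` with `∑ r_i² ≤ 1`, so Markov's inequality for the `2p`-th moment
bounds the tail at level `n^ε` by `O(n^(-2pε))`; real and imaginary parts of the coefficients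
are treated separately, and `p` is chosen with `2pε > D`.
-/

lemma lt_abs_sum_re_or_lt_abs_sum_im {ι : Type*} (s : Finset ι) (A : ι → ℂ) (y : ι → ℝ) {c : ℝ}
    (h : 2 * c < ‖∑ i ∈ s, A i * y i‖) :
    c < |∑ i ∈ s, (A i).re * y i| ∨ c < |∑ i ∈ s, (A i).im * y i| := by
  have hw := Complex.norm_le_abs_re_add_abs_im (∑ i ∈ s, A i * y i)
  simp only [Complex.re_sum, Complex.im_sum, Complex.re_mul_ofReal, Complex.im_mul_ofReal] at hw
  by_contra! hc
  linarith

lemma lt_norm_sum_mul_ofReal_mul {ι : Type*} (s : Finset ι) (A : ι → ℂ) (y : ι → ℝ) {a b : ℝ}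
    (ha : 0 < a) (h : b * a⁻¹ < ‖∑ i ∈ s, A i * y i‖) : b < ‖∑ i ∈ s, A i * ↑(a * y i)‖ := by
  have hscale : ∑ i ∈ s, A i * ↑(a * y i) = a * ∑ i ∈ s, A i * y i := by
    rw [mul_sum]
    exact sum_congr rfl fun i _ => by push_cast; ring
  rwa [hscale, norm_mul, Complex.norm_real, Real.norm_of_nonneg ha.le, ← inv_mul_lt_iff₀ ha,
    mul_comm]

lemma abs_pow_le_one_add_pow_two_mul (y : ℝ) {q p : ℕ} (hq : q ≤ 2 * p) :
    |y| ^ q ≤ 1 + y ^ (2 * p) := by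
  rcases le_total |y| 1 with h | h
  · linarith [pow_le_one₀ (abs_nonneg y) h (n := q), even_two_mul p |>.pow_nonneg y]
  · calc |y| ^ q ≤ |y| ^ (2 * p) := pow_le_pow_right₀ h hq
      _ = y ^ (2 * p) := (even_two_mul p).pow_abs y
      _ ≤ 1 + y ^ (2 * p) := le_add_of_nonneg_left zero_le_one

lemma sum_range_two_mul_choose_le (p : ℕ) :
    ∑ j ∈ range (2 * p), ((2 * p).choose j : ℝ) ≤ 4 ^ p := by
  have hall : ∑ j ∈ range (2 * p + 1), ((2 * p).choose j : ℝ) = 4 ^ p := by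
    rw [← Nat.cast_sum, Nat.sum_range_choose, pow_mul]
    norm_num
  rw [sum_range_succ] at hall
  linarith [(Nat.cast_nonneg ((2 * p).choose (2 * p)) : (0 : ℝ) ≤ _)]

lemma eventually_div_rpow_pow_le {ε D : ℝ} {k : ℕ} (h : D < k * ε) (K : ℝ) :
    ∀ᶠ n : ℕ in atTop, K / ((n : ℝ) ^ ε) ^ k ≤ (n : ℝ) ^ (-D) := by
  have hgrow : Tendsto (fun n : ℕ => (n : ℝ) ^ (k * ε - D)) atTop atTop :=
    (tendsto_rpow_atTop (by linarith)).comp tendsto_natCast_atTop_atTop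
  filter_upwards [hgrow.eventually_ge_atTop K, eventually_gt_atTop 0] with n hK hn
  have hn' : (0 : ℝ) < n := by exact_mod_cast hn
  rw [← Real.rpow_mul_natCast hn'.le, div_le_iff₀ (by positivity), ← Real.rpow_add hn']
  convert hK using 2
  ring

lemma exists_ne_zero_lt_two_mul_mul {ε D : ℝ} (hε : 0 < ε) (hD : 0 < D) :
    ∃ p : ℕ, p ≠ 0 ∧ D < (2 * p : ℕ) * ε := by
  obtain ⟨p, hp⟩ := exists_nat_gt (D / (2 * ε))
  rw [div_lt_iff₀ (by positivity)] at hp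
  refine ⟨p, ?_, by push_cast; linarith⟩
  rintro rfl
  simp only [CharP.cast_eq_zero, zero_mul] at hp
  linarith

section Moments

variable {Ω : Type*} [MeasurableSpace Ω] {P : Measure Ω}

lemma memLp_of_integrable_abs_pow {f : Ω → ℝ} {m : ℕ} (hf : AEStronglyMeasurable f P)
    (hint : Integrable (fun ω => |f ω| ^ m) P) : MemLp f m P := by
  rcases eq_or_ne m 0 with rfl | hm
  · simpa using memLp_zero_iff_aestronglyMeasurable.2 hf
  · exact (integrable_norm_rpow_iff hf (by simpa) (by simp)).1 (by simpa using hint)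

lemma integrable_pow_of_memLp [IsFiniteMeasure P] {f : Ω → ℝ} {m : ℕ} (hf : MemLp f m P) :
    Integrable (fun ω => f ω ^ m) P :=
  hf.integrable_norm_pow'.mono' (hf.1.pow m) (ae_of_all _ fun ω => by simp [norm_pow])

lemma measure_lt_abs_le_integral_pow_div [IsFiniteMeasure P] {f : Ω → ℝ} {q : ℕ}
    (hf : Integrable (fun ω => f ω ^ (2 * q)) P) {t : ℝ} (ht : 0 < t) :
    P {ω | t < |f ω|} ≤ ENNReal.ofReal ((∫ ω, f ω ^ (2 * q) ∂P) / t ^ (2 * q)) := by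
  have hmarkov := mul_meas_ge_le_integral_of_nonneg
    (ae_of_all _ fun ω => (even_two_mul q).pow_nonneg (f ω)) hf (t ^ (2 * q))
  calc P {ω | t < |f ω|} ≤ P {ω | t ^ (2 * q) ≤ f ω ^ (2 * q)} := by
        refine measure_mono fun ω (hω : t < |f ω|) => ?_
        simpa only [Set.mem_ofPred_eq, (even_two_mul q).pow_abs] using
          pow_le_pow_left₀ ht.le hω.le (2 * q)
    _ = ENNReal.ofReal (P.real {ω | t ^ (2 * q) ≤ f ω ^ (2 * q)}) := (ofReal_measureReal).symm
    _ ≤ _ := by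
        gcongr
        rw [le_div_iff₀ (by positivity)]
        linarith

lemma abs_integral_pow_le_integral_abs_pow (f : Ω → ℝ) (m : ℕ) :
    |∫ ω, f ω ^ m ∂P| ≤ ∫ ω, |f ω| ^ m ∂P := by
  simpa only [abs_pow] using abs_integral_le_integral_abs (f := fun ω => f ω ^ m)

variable [IsProbabilityMeasure P]

lemma abs_integral_pow_le_one_add_integral_pow {f : Ω → ℝ} {j p : ℕ} (hf : MemLp f (2 * p : ℕ) P)
    (hj : j ≤ 2 * p) : |∫ ω, f ω ^ j ∂P| ≤ 1 + ∫ ω, f ω ^ (2 * p) ∂P := by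
  have hint := integrable_pow_of_memLp hf
  calc |∫ ω, f ω ^ j ∂P| ≤ ∫ ω, |f ω| ^ j ∂P := abs_integral_pow_le_integral_abs_pow f j
    _ ≤ ∫ ω, 1 + f ω ^ (2 * p) ∂P :=
        integral_mono (hf.mono_exponent (by exact_mod_cast hj)).integrable_norm_pow'
          ((integrable_const 1).add hint) fun ω => abs_pow_le_one_add_pow_two_mul _ hj
    _ = 1 + ∫ ω, f ω ^ (2 * p) ∂P := by
        rw [integral_add (integrable_const 1) hint]
        simp

lemma integral_add_pow_of_indepFun {X Y : Ω → ℝ} (hXY : IndepFun X Y P) {k : ℕ}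
    (hX : MemLp X k P) (hY : MemLp Y k P) :
    ∫ ω, (X ω + Y ω) ^ k ∂P =
      ∑ j ∈ range (k + 1), (∫ ω, X ω ^ j ∂P) * (∫ ω, Y ω ^ (k - j) ∂P) * k.choose j := by
  have hXpow : ∀ j ≤ k, Integrable (fun ω => X ω ^ j) P := fun j hj =>
    integrable_pow_of_memLp (hX.mono_exponent (by exact_mod_cast hj))
  have hYpow : ∀ j ≤ k, Integrable (fun ω => Y ω ^ j) P := fun j hj =>
    integrable_pow_of_memLp (hY.mono_exponent (by exact_mod_cast hj))
  have hpow : ∀ i j, IndepFun (fun ω => X ω ^ i) (fun ω => Y ω ^ j) P := fun i j =>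
    hXY.comp (measurable_id.pow_const i) (measurable_id.pow_const j)
  have hprod : ∀ j ∈ range (k + 1), Integrable (fun ω => X ω ^ j * Y ω ^ (k - j)) P :=
    fun j hj => (hpow j (k - j)).integrable_mul (hXpow j (Nat.le_of_lt_succ (mem_range.1 hj)))
      (hYpow _ (Nat.sub_le _ _))
  simp_rw [add_pow]
  rw [integral_finsetSum _ fun j hj => (hprod j hj).mul_const _]
  refine sum_congr rfl fun j hj => ?_
  rw [integral_mul_const]
  congr 1
  exact (hpow j (k - j)).integral_fun_mul_eq_mul_integral
    (hXpow j (Nat.le_of_lt_succ (mem_range.1 hj))).1 (hYpow _ (Nat.sub_le _ _)).1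

lemma one_add_integral_add_pow_le {X Y : Ω → ℝ} (hXY : IndepFun X Y P) {p : ℕ}
    (hX : MemLp X (2 * p : ℕ) P) (hY : MemLp Y (2 * p : ℕ) P) (hY0 : ∫ ω, Y ω ∂P = 0)
    {b : ℝ} (hb0 : 0 ≤ b) (hb : ∀ m, 2 ≤ m → m ≤ 2 * p → |∫ ω, Y ω ^ m ∂P| ≤ b) :
    1 + ∫ ω, (X ω + Y ω) ^ (2 * p) ∂P ≤ (1 + ∫ ω, X ω ^ (2 * p) ∂P) * (1 + 4 ^ p * b) := by
  set I := ∫ ω, X ω ^ (2 * p) ∂P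
  have hI : 0 ≤ I := integral_nonneg fun ω => (even_two_mul p).pow_nonneg (X ω)
  have hterm : ∀ j ∈ range (2 * p),
      (∫ ω, X ω ^ j ∂P) * (∫ ω, Y ω ^ (2 * p - j) ∂P) * (2 * p).choose j ≤
        (2 * p).choose j * ((1 + I) * b) := by
    intro j hj
    rw [mem_range] at hj
    rcases (show 2 * p - j = 1 ∨ 2 ≤ 2 * p - j by omega) with hlast | htwo
    · simp only [hlast, pow_one, hY0, mul_zero, zero_mul]
      positivity
    · calc (∫ ω, X ω ^ j ∂P) * (∫ ω, Y ω ^ (2 * p - j) ∂P) * (2 * p).choose j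
          ≤ |∫ ω, X ω ^ j ∂P| * |∫ ω, Y ω ^ (2 * p - j) ∂P| * (2 * p).choose j := by
            rw [← abs_mul]
            gcongr
            exact le_abs_self _
        _ ≤ (1 + I) * b * (2 * p).choose j := by
            gcongr
            · exact abs_integral_pow_le_one_add_integral_pow hX hj.le
            · exact hb _ htwo (Nat.sub_le _ _)
        _ = (2 * p).choose j * ((1 + I) * b) := by ring
  calc 1 + ∫ ω, (X ω + Y ω) ^ (2 * p) ∂P
      = 1 + I + ∑ j ∈ range (2 * p),
          (∫ ω, X ω ^ j ∂P) * (∫ ω, Y ω ^ (2 * p - j) ∂P) * (2 * p).choose j := by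
        rw [integral_add_pow_of_indepFun hXY hX hY, sum_range_succ]
        simp only [tsub_self, pow_zero, integral_const, probReal_univ, smul_eq_mul, mul_one,
          Nat.choose_self, Nat.cast_one, I]
        ring
    _ ≤ 1 + I + (∑ j ∈ range (2 * p), ((2 * p).choose j : ℝ)) * ((1 + I) * b) := by
        rw [sum_mul]
        linarith [sum_le_sum hterm]
    _ ≤ 1 + I + 4 ^ p * ((1 + I) * b) := by gcongr; exact sum_range_two_mul_choose_le p
    _ = (1 + I) * (1 + 4 ^ p * b) := by ring

theorem one_add_integral_sum_pow_le_exp {ι : Type*} {y : ι → Ω → ℝ}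
    (hmeas : ∀ i, Measurable (y i)) (hindep : iIndepFun y P) (hmean : ∀ i, ∫ ω, y i ω ∂P = 0)
    {p : ℕ} (hp : p ≠ 0) (hy : ∀ i, MemLp (y i) (2 * p : ℕ) P) {b : ι → ℝ}
    (hb : ∀ i m, 2 ≤ m → m ≤ 2 * p → |∫ ω, y i ω ^ m ∂P| ≤ b i) (s : Finset ι) :
    1 + ∫ ω, (∑ i ∈ s, y i ω) ^ (2 * p) ∂P ≤ Real.exp (4 ^ p * ∑ i ∈ s, b i) := by
  classical
  induction s using Finset.induction_on with
  | empty => simp [hp]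
  | insert k s hk ih =>
    have hindep' : IndepFun (fun ω => ∑ i ∈ s, y i ω) (y k) P := by
      simpa only [Finset.sum_fn] using hindep.indepFun_finsetSum_of_notMem hmeas hk
    have hS : MemLp (fun ω => ∑ i ∈ s, y i ω) (2 * p : ℕ) P :=
      memLp_finsetSum s fun i _ => hy i
    have hbk : 0 ≤ b k := (abs_nonneg _).trans (hb k 2 le_rfl (by omega))
    calc 1 + ∫ ω, (∑ i ∈ insert k s, y i ω) ^ (2 * p) ∂P
        = 1 + ∫ ω, (∑ i ∈ s, y i ω + y k ω) ^ (2 * p) ∂P := by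
          simp only [sum_insert hk, add_comm]
      _ ≤ (1 + ∫ ω, (∑ i ∈ s, y i ω) ^ (2 * p) ∂P) * (1 + 4 ^ p * b k) :=
          one_add_integral_add_pow_le hindep' hS (hy k) (hmean k) hbk (hb k)
      _ ≤ Real.exp (4 ^ p * ∑ i ∈ s, b i) * Real.exp (4 ^ p * b k) := by
          have hS0 : 0 ≤ ∫ ω, (∑ i ∈ s, y i ω) ^ (2 * p) ∂P :=
            integral_nonneg fun ω => (even_two_mul p).pow_nonneg _
          gcongr
          linarith [Real.add_one_le_exp (4 ^ p * b k)]
      _ = Real.exp (4 ^ p * ∑ i ∈ insert k s, b i) := by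
          rw [← Real.exp_add, sum_insert hk]
          ring_nf

theorem measure_lt_abs_sum_le {ι : Type*} [Fintype ι] {z : ι → Ω → ℝ}
    (hmeas : ∀ i, Measurable (z i)) (hindep : iIndepFun z P) (hmean : ∀ i, ∫ ω, z i ω ∂P = 0)
    {p : ℕ} (hp : p ≠ 0) (hz : ∀ i, MemLp (z i) (2 * p : ℕ) P) {C : ℝ} (hC0 : 0 ≤ C)
    (hC : ∀ i m, 2 ≤ m → m ≤ 2 * p → |∫ ω, z i ω ^ m ∂P| ≤ C)
    (r : ι → ℝ) {σ t : ℝ} (hσ : 0 ≤ σ) (hr : ∑ i, r i ^ 2 ≤ σ ^ 2) (ht : 0 < t) :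
    P {ω | t * σ < |∑ i, r i * z i ω|} ≤ ENNReal.ofReal (Real.exp (4 ^ p * C) / t ^ (2 * p)) := by
  rcases hσ.eq_or_lt with rfl | hσ
  · have hr0 : ∀ i, r i = 0 := fun i => pow_eq_zero_iff two_ne_zero |>.1 <|
      (sum_eq_zero_iff_of_nonneg fun i _ => sq_nonneg (r i)).1
        (le_antisymm (by simpa using hr) (sum_nonneg fun i _ => sq_nonneg (r i))) i (mem_univ i)
    simp [hr0]
  have hrσ : ∀ i, |r i / σ| ≤ 1 := fun i => by
    rw [abs_div, abs_of_pos hσ, div_le_one hσ]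
    exact abs_le_of_sq_le_sq ((single_le_sum (fun i _ => sq_nonneg (r i)) (mem_univ i)).trans hr)
      hσ.le
  set y : ι → Ω → ℝ := fun i ω => r i / σ * z i ω
  have hy : ∀ i m, 2 ≤ m → m ≤ 2 * p → |∫ ω, y i ω ^ m ∂P| ≤ C * (r i / σ) ^ 2 := by
    intro i m hm2 hm
    simp only [y, mul_pow, integral_const_mul, abs_mul, abs_pow]
    calc |r i / σ| ^ m * |∫ ω, z i ω ^ m ∂P| ≤ (r i / σ) ^ 2 * C := by
          gcongr
          · exact (pow_le_pow_of_le_one (abs_nonneg _) (hrσ i) hm2).trans_eq (sq_abs _)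
          · exact hC i m hm2 hm
      _ = C * (r i / σ) ^ 2 := mul_comm _ _
  have hmoment := one_add_integral_sum_pow_le_exp (y := y)
    (fun i => (hmeas i).const_mul _) (hindep.comp _ fun i => measurable_const_mul (r i / σ))
    (fun i => by simp [y, integral_const_mul, hmean]) hp (fun i => (hz i).const_mul _) hy univ
  have hb : ∑ i, C * (r i / σ) ^ 2 ≤ C := by
    rw [← mul_sum]
    refine mul_le_of_le_one_right hC0 ?_
    simp_rw [div_pow]
    rw [← sum_div, div_le_one (by positivity)]
    exact hr
  have hevent : {ω | t * σ < |∑ i, r i * z i ω|} = {ω | t < |∑ i, y i ω|} := by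
    ext ω
    have : ∑ i, y i ω = (∑ i, r i * z i ω) / σ := by
      rw [sum_div]
      exact sum_congr rfl fun i _ => by ring
    rw [Set.mem_ofPred_eq, Set.mem_ofPred_eq, this, abs_div, abs_of_pos hσ, lt_div_iff₀ hσ]
  rw [hevent]
  refine (measure_lt_abs_le_integral_pow_div (integrable_pow_of_memLp
    (memLp_finsetSum univ fun i _ => (hz i).const_mul (r i / σ))) ht).trans ?_
  gcongr
  linarith [Real.exp_le_exp.2 (mul_le_mul_of_nonneg_left hb (by positivity : (0 : ℝ) ≤ 4 ^ p))]

theorem measure_lt_norm_sum_le {ι : Type*} [Fintype ι] {z : ι → Ω → ℝ}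
    (hmeas : ∀ i, Measurable (z i)) (hindep : iIndepFun z P) (hmean : ∀ i, ∫ ω, z i ω ∂P = 0)
    {p : ℕ} (hp : p ≠ 0) (hz : ∀ i, MemLp (z i) (2 * p : ℕ) P) {C : ℝ} (hC0 : 0 ≤ C)
    (hC : ∀ i m, 2 ≤ m → m ≤ 2 * p → |∫ ω, z i ω ^ m ∂P| ≤ C) (A : ι → ℂ) {t : ℝ} (ht : 0 < t) :
    P {ω | t * √(∑ i, ‖A i‖ ^ 2) < ‖∑ i, A i * z i ω‖} ≤
      ENNReal.ofReal (2 * (Real.exp (4 ^ p * C) / (t / 2) ^ (2 * p))) := by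
  have htail : ∀ r : ι → ℝ, (∀ i, |r i| ≤ ‖A i‖) →
      P {ω | t / 2 * √(∑ i, ‖A i‖ ^ 2) < |∑ i, r i * z i ω|} ≤
        ENNReal.ofReal (Real.exp (4 ^ p * C) / (t / 2) ^ (2 * p)) := fun r hr =>
    measure_lt_abs_sum_le hmeas hindep hmean hp hz hC0 hC r (Real.sqrt_nonneg _)
      (by
        rw [Real.sq_sqrt (by positivity)]
        exact sum_le_sum fun i _ => sq_le_sq.2 ((hr i).trans (le_abs_self _)))
      (by positivity)
  have hsub : {ω | t * √(∑ i, ‖A i‖ ^ 2) < ‖∑ i, A i * z i ω‖} ⊆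
      {ω | t / 2 * √(∑ i, ‖A i‖ ^ 2) < |∑ i, (A i).re * z i ω|} ∪
        {ω | t / 2 * √(∑ i, ‖A i‖ ^ 2) < |∑ i, (A i).im * z i ω|} := fun ω hω =>
    lt_abs_sum_re_or_lt_abs_sum_im univ A (fun i => z i ω) (by linarith [hω.out])
  calc _ ≤ _ := (measure_mono hsub).trans (measure_union_le _ _)
    _ ≤ _ := add_le_add (htail _ fun i => Complex.abs_re_le_norm _)
        (htail _ fun i => Complex.abs_im_le_norm _)
    _ = _ := by
        rw [← ENNReal.ofReal_add (by positivity) (by positivity)]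
        ring_nf

theorem measure_mul_inv_lt_norm_sum_le {ι : Type*} [Fintype ι] {x : ι → Ω → ℝ}
    (hmeas : ∀ i, Measurable (x i)) (hindep : iIndepFun x P) (hmean : ∀ i, ∫ ω, x i ω ∂P = 0)
    {p : ℕ} (hp : p ≠ 0) (hx : ∀ i, MemLp (x i) (2 * p : ℕ) P) {a C : ℝ} (ha : 0 < a)
    (hC0 : 0 ≤ C) (hC : ∀ i m, 2 ≤ m → m ≤ 2 * p → |∫ ω, (a * x i ω) ^ m ∂P| ≤ C)
    (A : ι → ℂ) {t : ℝ} (ht : 0 < t) :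
    P {ω | t * a⁻¹ * √(∑ i, ‖A i‖ ^ 2) < ‖∑ i, A i * x i ω‖} ≤
      ENNReal.ofReal (2 * (Real.exp (4 ^ p * C) / (t / 2) ^ (2 * p))) := by
  refine (measure_mono fun ω hω => ?_).trans (measure_lt_norm_sum_le
    (z := fun i ω => a * x i ω) (fun i => (hmeas i).const_mul a)
    (hindep.comp _ fun i => measurable_const_mul a) (fun i => by simp [integral_const_mul, hmean])
    hp (fun i => (hx i).const_mul a) hC0 hC A ht)
  exact lt_norm_sum_mul_ofReal_mul univ A (fun i => x i ω) ha (by rwa [mul_right_comm] at hω)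

end Moments

theorem stmt_15_general (Ω : Type*) [MeasurableSpace Ω] (P : Measure Ω) [IsProbabilityMeasure P]
    (Cm : ℕ → ℝ) (N : ℕ → ℕ) (x : ∀ n : ℕ, Fin (N n) → Ω → ℝ)
    (A : ∀ n : ℕ, Fin (N n) → ℂ)
    (hmeas : ∀ n i, Measurable (x n i))
    (hindep : ∀ n, iIndepFun (x n) P)
    (hmean : ∀ n i, ∫ ω, x n i ω ∂P = 0)
    (hmomint : ∀ n i (k : ℕ), Integrable (fun ω => |x n i ω| ^ k) P)
    (hmom : ∀ (k n : ℕ) (i : Fin (N n)),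
      ∫ ω, |Real.sqrt n * x n i ω| ^ k ∂P ≤ Cm k) :
    ∀ ε : ℝ, 0 < ε → ∀ D : ℝ, 0 < D → ∃ n₀ : ℕ, ∀ n ≥ n₀,
      P {ω | (n : ℝ) ^ ε * (n : ℝ) ^ (-(1 / 2 : ℝ)) *
            Real.sqrt (∑ i, ‖A n i‖ ^ 2) <
          ‖∑ i, A n i * (x n i ω : ℂ)‖} ≤
        ENNReal.ofReal ((n : ℝ) ^ (-D)) := by
  intro ε hε D hD
  obtain ⟨p, hp0, hpε⟩ := exists_ne_zero_lt_two_mul_mul hε hD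
  set C := ∑ j ∈ range (2 * p + 1), |Cm j|
  obtain ⟨n₀, hn₀⟩ := eventually_atTop.1 ((eventually_div_rpow_pow_le hpε
    (2 * 4 ^ p * Real.exp (4 ^ p * C))).and (eventually_gt_atTop 0))
  refine ⟨n₀, fun n hn => ?_⟩
  obtain ⟨hbound, hn0⟩ := hn₀ n hn
  have hC : ∀ i m, 2 ≤ m → m ≤ 2 * p → |∫ ω, (√(n : ℝ) * x n i ω) ^ m ∂P| ≤ C :=
    fun i m _ hm => (abs_integral_pow_le_integral_abs_pow _ m).trans <| (hmom m n i).trans <|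
      (le_abs_self _).trans (single_le_sum (fun j _ => abs_nonneg (Cm j)) (mem_range.2 (by omega)))
  rw [Real.rpow_neg (Nat.cast_nonneg n), ← Real.sqrt_eq_rpow]
  refine (measure_mul_inv_lt_norm_sum_le (hmeas n) (hindep n) (hmean n) hp0
    (fun i => memLp_of_integrable_abs_pow (hmeas n i).aestronglyMeasurable (hmomint n i _))
    (Real.sqrt_pos.2 (by exact_mod_cast hn0)) (sum_nonneg fun j _ => abs_nonneg (Cm j)) hC (A n)
    (by positivity)).trans (ENNReal.ofReal_le_ofReal ?_)
  calc 2 * (Real.exp (4 ^ p * C) / ((n : ℝ) ^ ε / 2) ^ (2 * p))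
      = 2 * 4 ^ p * Real.exp (4 ^ p * C) / ((n : ℝ) ^ ε) ^ (2 * p) := by
        rw [div_pow]
        field_simp
        rw [pow_mul]
        ring
    _ ≤ (n : ℝ) ^ (-D) := hbound

/-- Linear large-deviation bound. For independent centered real random
variables `x_i` with variance at most `n⁻¹` and all moments of `√n·x_i` bounded, and
deterministic complex coefficients `A_i`, for every `ε, D > 0` one has, for large `n`,
`P(|∑ A_i x_i| > n^ε n^{-1/2} (∑|A_i|²)^{1/2}) ≤ n^{-D}`. -/
theorem stmt_15 (Ω : Type*) [MeasurableSpace Ω] (P : Measure Ω) [IsProbabilityMeasure P]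
    (Cm : ℕ → ℝ) (N : ℕ → ℕ) (x : ∀ n : ℕ, Fin (N n) → Ω → ℝ)
    (A : ∀ n : ℕ, Fin (N n) → ℂ)
    (hmeas : ∀ n i, Measurable (x n i))
    (hindep : ∀ n, iIndepFun (x n) P)
    (hmean : ∀ n i, ∫ ω, x n i ω ∂P = 0)
    (hvar : ∀ n : ℕ, 1 ≤ n → ∀ i, ∫ ω, (x n i ω) ^ 2 ∂P ≤ 1 / n)
    (hmomint : ∀ n i (k : ℕ), Integrable (fun ω => |x n i ω| ^ k) P)
    (hmom : ∀ (k n : ℕ) (i : Fin (N n)),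
      ∫ ω, |Real.sqrt n * x n i ω| ^ k ∂P ≤ Cm k) :
    ∀ ε : ℝ, 0 < ε → ∀ D : ℝ, 0 < D → ∃ n₀ : ℕ, ∀ n ≥ n₀,
      P {ω | (n : ℝ) ^ ε * (n : ℝ) ^ (-(1 / 2 : ℝ)) *
            Real.sqrt (∑ i, ‖A n i‖ ^ 2) <
          ‖∑ i, A n i * (x n i ω : ℂ)‖} ≤
        ENNReal.ofReal ((n : ℝ) ^ (-D)) :=
  stmt_15_general Ω P Cm N x A hmeas hindep hmean hmomint hmom
end
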